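/- arXiv:1911.04358 — 4 statements merged into one kernel-verified Lean document; each statement's English description precedes it below -/
import Mathlib

section
/- Let k ≥ 4 with k - 1 ≡ r (mod 3), 0 ≤ r ≤ 2, and n ≥ k. Then pr(K_n, C_k) ≥ max{ C(k-1,2) + n - k + 1, ⌊(k-1)/3⌋·n - C(⌊(k-1)/3⌋+1, 2) + 1 + r }, i.e., there is an edge-coloring of K_n with that many colors and no properly colored cycle of length k. -/
/-!
Two colorings. In the first, the vertices `0, …, k-2` span a rainbow clique and every other edge
gets the color of its larger endpoint: the largest vertex of a `k`-cycle is at least `k - 1`, so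
both cycle edges at it get its color.

In the second, write `k - 1 = 3t + r`. Edges meeting `{0, …, t-1}` are rainbow and any other edge
`ab` gets the color `min (min a b) (t + r)`. Walk around a properly colored `k`-cycle and look at
its `k` windows of three consecutive vertices. A window with all vertices `≥ t + r` has both edges
colored `t + r`, so every window has its minimum below `t + r`. A vertex `x ≥ t` whose two cycle
neighbours are both larger sees the color `min x (t + r)` twice, so such an `x` is the minimum of
at most one window, while any vertex is the minimum of at most the three windows containing it.
Hence `k ≤ 3t + r`, a contradiction.
-/

/-- Number of distinct colors used on the edges of `K_n` by the edge-coloring `c`. -/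
def colorsUsed (n : ℕ) (c : Fin n → Fin n → ℕ) : ℕ :=
  ((Finset.univ.filter fun p : Fin n × Fin n => p.1 ≠ p.2).image fun p => c p.1 p.2).card

/-- The edge-colored `K_n` contains a properly colored cycle on `k` vertices. -/
def HasPCCycle (n k : ℕ) (c : Fin n → Fin n → ℕ) : Prop :=
  ∃ p : Fin k → Fin n, Function.Injective p ∧
    ∀ i : Fin k,
      c (p i) (p ⟨(i.1 + 1) % k, Nat.mod_lt _ (Nat.lt_of_le_of_lt (Nat.zero_le _) i.isLt)⟩) ≠
        c (p ⟨(i.1 + 1) % k, Nat.mod_lt _ (Nat.lt_of_le_of_lt (Nat.zero_le _) i.isLt)⟩)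
          (p ⟨(i.1 + 2) % k, Nat.mod_lt _ (Nat.lt_of_le_of_lt (Nat.zero_le _) i.isLt)⟩)

open Finset Function

section Window

variable {α : Type*} [LinearOrder α] {k : ℕ} [NeZero k] (q : Fin k → α)

def windowMin (i : Fin k) : α := min (q (i - 1)) (min (q i) (q (i + 1)))

lemma windowMin_le_prev (i : Fin k) : windowMin q i ≤ q (i - 1) := min_le_left _ _

lemma windowMin_le_self (i : Fin k) : windowMin q i ≤ q i :=
  (min_le_right _ _).trans (min_le_left _ _)

lemma windowMin_le_next (i : Fin k) : windowMin q i ≤ q (i + 1) :=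
  (min_le_right _ _).trans (min_le_right _ _)

lemma exists_apply_eq_windowMin (i : Fin k) : ∃ j, q j = windowMin q i := by
  unfold windowMin
  rcases min_choice (q (i - 1)) (min (q i) (q (i + 1))) with h | h <;> rw [h]
  · exact ⟨_, rfl⟩
  · rcases min_choice (q i) (q (i + 1)) with h' | h' <;> rw [h']
    · exact ⟨_, rfl⟩
    · exact ⟨_, rfl⟩

variable {q}

lemma eq_of_windowMin_eq_apply (hq : Injective q) {i j : Fin k} (h : windowMin q i = q j) :
    i = j + 1 ∨ i = j ∨ i = j - 1 := by
  unfold windowMin at h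
  rcases min_choice (q (i - 1)) (min (q i) (q (i + 1))) with h₁ | h₁ <;> rw [h₁] at h
  · left
    rw [← hq h, sub_add_cancel]
  · rcases min_choice (q i) (q (i + 1)) with h₂ | h₂ <;> rw [h₂] at h
    · exact Or.inr (Or.inl (hq h))
    · right; right
      rw [← hq h, add_sub_cancel_right]

lemma card_windowMin_fiber_le_three (hq : Injective q) (x : α) :
    #{i | windowMin q i = x} ≤ 3 := by
  rcases eq_empty_or_nonempty ({i | windowMin q i = x} : Finset (Fin k)) with h | ⟨i₀, hi₀⟩
  · simp [h]
  obtain ⟨j, hj⟩ := exists_apply_eq_windowMin q i₀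
  rw [(mem_filter.1 hi₀).2] at hj
  calc #{i | windowMin q i = x} ≤ #{j + 1, j, j - 1} := by
        refine card_le_card fun i hi => ?_
        simpa using eq_of_windowMin_eq_apply hq ((mem_filter.1 hi).2.trans hj.symm)
    _ ≤ 3 := card_le_three

lemma card_windowMin_fiber_le_one (hq : Injective q) (x : α)
    (hx : ∀ j, q j = x → q (j - 1) < x ∨ q (j + 1) < x) :
    #{i | windowMin q i = x} ≤ 1 := by
  rw [card_le_one]
  intro a ha b hb
  rw [mem_filter] at ha hb
  obtain ⟨j, hj⟩ := exists_apply_eq_windowMin q a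
  rw [ha.2] at hj
  have hloc : ¬ (x ≤ q (j - 1) ∧ x ≤ q (j + 1)) := fun ⟨h₁, h₂⟩ =>
    (hx j hj).elim (not_lt.2 h₁) (not_lt.2 h₂)
  have hfiber : ∀ i, windowMin q i = x →
      (i = j + 1 ∧ x ≤ q (j + 1)) ∨ (i = j - 1 ∧ x ≤ q (j - 1)) := by
    intro i hi
    rcases eq_of_windowMin_eq_apply hq (hi.trans hj.symm) with rfl | rfl | rfl
    · exact Or.inl ⟨rfl, hi ▸ windowMin_le_self q _⟩
    · exact (hloc ⟨hi ▸ windowMin_le_prev q i, hi ▸ windowMin_le_next q i⟩).elim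
    · exact Or.inr ⟨rfl, hi ▸ windowMin_le_self q _⟩
  rcases hfiber a ha.2 with ⟨rfl, h₁⟩ | ⟨rfl, h₁⟩ <;>
    rcases hfiber b hb.2 with ⟨rfl, h₂⟩ | ⟨rfl, h₂⟩
  all_goals first
    | rfl
    | exact (hloc ⟨‹_›, ‹_›⟩).elim

end Window

lemma card_le_of_windowMin_lt {k : ℕ} [NeZero k] {q : Fin k → ℕ} (hq : Injective q)
    (t r : ℕ) (hwindow : ∀ i, windowMin q i < t + r)
    (hloc : ∀ j, t ≤ q j → q (j - 1) < q j ∨ q (j + 1) < q j) :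
    k ≤ 3 * t + r :=
  calc k = #(univ : Finset (Fin k)) := (card_fin k).symm
    _ = ∑ x ∈ range (t + r), #{i | windowMin q i = x} :=
      card_eq_sum_card_fiberwise fun i _ => mem_range.2 (hwindow i)
    _ = ∑ x ∈ range t, #{i | windowMin q i = x} +
          ∑ x ∈ range r, #{i | windowMin q i = t + x} :=
      sum_range_add _ t r
    _ ≤ ∑ _x ∈ range t, 3 + ∑ _x ∈ range r, 1 := by
      gcongr with x
      · exact card_windowMin_fiber_le_three hq x
      · refine card_windowMin_fiber_le_one hq _ fun j hj => ?_
        rw [← hj]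
        exact hloc j (hj ▸ Nat.le_add_right t x)
    _ = 3 * t + r := by simp [mul_comm]

lemma not_hasPCCycle_of_forall_exists_eq {n k : ℕ} [NeZero k] (f : ℕ → ℕ → ℕ)
    (h : ∀ q : Fin k → ℕ, Injective q → ∃ i, f (q (i - 1)) (q i) = f (q i) (q (i + 1))) :
    ¬ HasPCCycle n k fun i j => f i j := by
  rintro ⟨p, hp, hpc⟩
  obtain ⟨i, hi⟩ := h (fun j => p j) (Fin.val_injective.comp hp)
  have h₁ : ∀ j : Fin k,
      (⟨(j.1 + 1) % k, Nat.mod_lt _ (Nat.lt_of_le_of_lt (Nat.zero_le _) j.isLt)⟩ : Fin k) =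
        j + 1 :=
    fun j => by ext; simp [Fin.val_add]
  have h₂ : ∀ j : Fin k,
      (⟨(j.1 + 2) % k, Nat.mod_lt _ (Nat.lt_of_le_of_lt (Nat.zero_le _) j.isLt)⟩ : Fin k) =
        j + 1 + 1 :=
    fun j => by ext; simp [Fin.val_add, Nat.add_mod_mod, Nat.mod_add_mod, add_assoc]
  have := hpc (i - 1)
  rw [h₁, h₂, sub_add_cancel] at this
  exact this hi

/-- Offset by `n` so that it never collides with the colors `< n` taken from vertex labels. -/
def edgeCode (n a b : ℕ) : ℕ := n + Nat.pair (min a b) (max a b)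

lemma edgeCode_comm (n a b : ℕ) : edgeCode n a b = edgeCode n b a := by
  rw [edgeCode, edgeCode, min_comm, max_comm]

lemma edgeCode_inj {n a b a' b' : ℕ} (h : a ≤ b) (h' : a' ≤ b')
    (he : edgeCode n a b = edgeCode n a' b') : a = a' ∧ b = b' := by
  rwa [edgeCode, edgeCode, min_eq_left h, max_eq_right h, min_eq_left h', max_eq_right h',
    add_right_inj, Nat.pair_eq_pair] at he

def lowPairs (s m : ℕ) : Finset (Σ _ : ℕ, ℕ) := (range s).sigma fun a => Ioo a m

lemma card_lowPairs_add_choose {s m : ℕ} (h : s ≤ m) :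
    #(lowPairs s m) + (s + 1).choose 2 = s * m := by
  rw [lowPairs, card_sigma]
  induction s with
  | zero => simp
  | succ s ih =>
    have := ih (by omega)
    have hchoose : (s + 1 + 1).choose 2 = (s + 1).choose 1 + (s + 1).choose 2 :=
      Nat.choose_succ_succ' _ _
    rw [sum_range_succ, Nat.card_Ioo, hchoose, Nat.choose_one_right, Nat.succ_mul]
    omega

lemma card_lowPairs_self (m : ℕ) : #(lowPairs m m) = m.choose 2 := by
  have hsum := card_lowPairs_add_choose (le_refl m)
  have hsucc : (m + 1).choose 2 = m.choose 1 + m.choose 2 := Nat.choose_succ_succ' _ _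
  have hmul : (m + 1) * m.choose 1 = (m + 1).choose 2 * 2 := Nat.add_one_mul_choose_eq _ _
  rw [Nat.choose_one_right] at hsucc
  rw [Nat.choose_one_right, Nat.succ_mul] at hmul
  omega

lemma card_le_colorsUsed {n : ℕ} (f : ℕ → ℕ → ℕ) (S : Finset ℕ)
    (hS : ∀ x ∈ S, ∃ a b, a < b ∧ b < n ∧ f a b = x) :
    #S ≤ colorsUsed n fun i j => f i j := by
  refine card_le_card fun x hx => ?_
  obtain ⟨a, b, hab, hb, rfl⟩ := hS x hx
  refine mem_image.2 ⟨(⟨a, by omega⟩, ⟨b, hb⟩), mem_filter.2 ⟨mem_univ _, ?_⟩, rfl⟩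
  simp only [ne_eq, Fin.mk.injEq]
  omega

lemma card_lowPairs_add_card_le_colorsUsed {n s m : ℕ} (f : ℕ → ℕ → ℕ) (hm : m ≤ n)
    (hcode : ∀ a b, a < s → a < b → b < m → f a b = edgeCode n a b) (T : Finset ℕ)
    (hT : ∀ x ∈ T, x < n ∧ ∃ a b, a < b ∧ b < n ∧ f a b = x) :
    #(lowPairs s m) + #T ≤ colorsUsed n fun i j => f i j := by
  set codes := (lowPairs s m).image fun e => edgeCode n e.1 e.2
  have hinj : Set.InjOn (fun e : Σ _ : ℕ, ℕ => edgeCode n e.1 e.2) (lowPairs s m) := by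
    rintro ⟨a, b⟩ hab ⟨a', b'⟩ hab' he
    simp only [lowPairs, coe_sigma, Set.mem_sigma_iff, coe_range, Set.mem_Iio, coe_Ioo,
      Set.mem_Ioo] at hab hab'
    obtain ⟨rfl, rfl⟩ := edgeCode_inj hab.2.1.le hab'.2.1.le he
    rfl
  have hdisj : Disjoint codes T := by
    refine disjoint_left.2 fun x hx hxT => ?_
    obtain ⟨e, -, rfl⟩ := mem_image.1 hx
    exact absurd (hT _ hxT).1 (not_lt.2 (Nat.le_add_right _ _))
  calc #(lowPairs s m) + #T = #(codes ∪ T) := by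
        rw [card_union_of_disjoint hdisj, card_image_of_injOn hinj]
    _ ≤ colorsUsed n fun i j => f i j := by
      refine card_le_colorsUsed f _ fun x hx => ?_
      rcases mem_union.1 hx with hx | hx
      · obtain ⟨⟨a, b⟩, hab, rfl⟩ := mem_image.1 hx
        simp only [lowPairs, mem_sigma, mem_range, mem_Ioo] at hab
        exact ⟨a, b, hab.2.1, by omega, hcode a b hab.1 hab.2.1 hab.2.2⟩
      · exact (hT x hx).2

def coloringByMax (n m a b : ℕ) : ℕ := if max a b < m then edgeCode n a b else max a b

lemma coloringByMax_comm (n m a b : ℕ) : coloringByMax n m a b = coloringByMax n m b a := by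
  rw [coloringByMax, coloringByMax, edgeCode_comm, max_comm]

lemma exists_coloringByMax_eq {n m k : ℕ} [NeZero k] (hmk : m < k) {q : Fin k → ℕ}
    (hq : Injective q) :
    ∃ i, coloringByMax n m (q (i - 1)) (q i) = coloringByMax n m (q i) (q (i + 1)) := by
  obtain ⟨i, hi⟩ := Finite.exists_max q
  have hm : m ≤ q i := by
    by_contra! h
    have := card_le_card_of_injOn (s := univ) q (fun j _ => mem_range.2 ((hi j).trans_lt h))
      hq.injOn
    simp only [card_univ, Fintype.card_fin, card_range] at this
    omega
  refine ⟨i, ?_⟩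
  rw [coloringByMax, coloringByMax, max_eq_right (hi _), max_eq_left (hi _), if_neg (not_lt.2 hm),
    if_neg (not_lt.2 hm)]

lemma exists_coloring_choose_add_le {n m k : ℕ} (hm : 0 < m) (hmk : m < k) (hmn : m ≤ n) :
    ∃ c : Fin n → Fin n → ℕ, (∀ i j, c i j = c j i) ∧ ¬ HasPCCycle n k c ∧
      m.choose 2 + (n - m) ≤ colorsUsed n c := by
  have : NeZero k := ⟨by omega⟩
  refine ⟨fun i j => coloringByMax n m i j, fun i j => coloringByMax_comm _ _ _ _,
    not_hasPCCycle_of_forall_exists_eq _ fun q hq => exists_coloringByMax_eq hmk hq, ?_⟩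
  rw [← card_lowPairs_self, ← Nat.card_Ico m n]
  refine card_lowPairs_add_card_le_colorsUsed _ hmn (fun a b _ hab hb => ?_) _ fun x hx => ?_
  · rw [coloringByMax, if_pos (by omega)]
  · rw [mem_Ico] at hx
    refine ⟨hx.2, 0, x, by omega, hx.2, ?_⟩
    rw [coloringByMax, if_neg (by omega), Nat.zero_max]

def coloringByMin (n t r a b : ℕ) : ℕ :=
  if min a b < t then edgeCode n a b else min (min a b) (t + r)

lemma coloringByMin_comm (n t r a b : ℕ) : coloringByMin n t r a b = coloringByMin n t r b a := by
  rw [coloringByMin, coloringByMin, edgeCode_comm, min_comm]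

lemma exists_coloringByMin_eq {n t r k : ℕ} [NeZero k] (hk : 3 * t + r < k) {q : Fin k → ℕ}
    (hq : Injective q) :
    ∃ i, coloringByMin n t r (q (i - 1)) (q i) = coloringByMin n t r (q i) (q (i + 1)) := by
  by_contra! hpc
  refine absurd (card_le_of_windowMin_lt hq t r (fun i => ?_) fun j hj => ?_) (not_le.2 hk)
  · by_contra! hi
    have h₁ : t + r ≤ min (q (i - 1)) (q i) :=
      le_min (hi.trans (windowMin_le_prev q i)) (hi.trans (windowMin_le_self q i))
    have h₂ : t + r ≤ min (q i) (q (i + 1)) :=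
      le_min (hi.trans (windowMin_le_self q i)) (hi.trans (windowMin_le_next q i))
    apply hpc i
    rw [coloringByMin, coloringByMin, if_neg (by omega), if_neg (by omega), min_eq_right h₁,
      min_eq_right h₂]
  · by_contra! hmin
    apply hpc j
    simp only [coloringByMin, min_eq_right hmin.1, min_eq_left hmin.2, if_neg (not_lt.2 hj)]

lemma exists_coloring_mul_sub_choose_le {n t r k : ℕ} (hk : 3 * t + r < k) (hn : t + r + 1 < n) :
    ∃ c : Fin n → Fin n → ℕ, (∀ i j, c i j = c j i) ∧ ¬ HasPCCycle n k c ∧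
      t * n - (t + 1).choose 2 + 1 + r ≤ colorsUsed n c := by
  have : NeZero k := ⟨by omega⟩
  refine ⟨fun i j => coloringByMin n t r i j, fun i j => coloringByMin_comm _ _ _ _ _,
    not_hasPCCycle_of_forall_exists_eq _ fun q hq => exists_coloringByMin_eq hk hq, ?_⟩
  have hcount := card_lowPairs_add_choose (show t ≤ n by omega)
  have hcolors := card_lowPairs_add_card_le_colorsUsed (coloringByMin n t r) le_rfl
    (fun a b ha _ _ => by rw [coloringByMin, if_pos ((min_le_left a b).trans_lt ha)])
    (Icc t (t + r)) fun x hx => by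
      rw [mem_Icc] at hx
      refine ⟨by omega, x, x + 1, by omega, by omega, ?_⟩
      rw [coloringByMin, min_eq_left (Nat.le_succ x), if_neg (by omega), min_eq_left hx.2]
  rw [Nat.card_Icc] at hcolors
  omega

/-- Lower bound for `pr(K_n, C_k)`: there is an edge-coloring of `K_n` with at least
`max { C(k-1,2)+n-k+1, ⌊(k-1)/3⌋n - C(⌊(k-1)/3⌋+1,2) + 1 + r }` colors and no
properly colored `C_k`, where `k-1 ≡ r (mod 3)`. -/
theorem pr_cycle_lower (k n : ℕ) (hk : 4 ≤ k) (hn : k ≤ n) :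
    ∃ c : Fin n → Fin n → ℕ, (∀ i j, c i j = c j i) ∧ ¬ HasPCCycle n k c ∧
      max (Nat.choose (k - 1) 2 + n - k + 1)
        (((k - 1) / 3) * n - Nat.choose ((k - 1) / 3 + 1) 2 + 1 + (k - 1) % 3)
        ≤ colorsUsed n c := by
  obtain ⟨c₁, hsymm₁, hpc₁, hc₁⟩ :=
    exists_coloring_choose_add_le (n := n) (m := k - 1) (k := k) (by omega) (by omega) (by omega)
  obtain ⟨c₂, hsymm₂, hpc₂, hc₂⟩ := exists_coloring_mul_sub_choose_le (n := n)
    (t := (k - 1) / 3) (r := (k - 1) % 3) (k := k) (by omega) (by omega)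
  replace hc₁ : Nat.choose (k - 1) 2 + n - k + 1 ≤ colorsUsed n c₁ := by omega
  rcases le_total (Nat.choose (k - 1) 2 + n - k + 1)
      (((k - 1) / 3) * n - Nat.choose ((k - 1) / 3 + 1) 2 + 1 + (k - 1) % 3) with h | h
  · exact ⟨c₂, hsymm₂, hpc₂, max_le (h.trans hc₂) hc₂⟩
  · exact ⟨c₁, hsymm₁, hpc₁, max_le hc₁ (h.trans hc₁)⟩
end

section
/- For every n ≥ 4, the maximum number of colors in an edge-coloring of K_n with no properly colored 4-cycle equals n. -/
/-!
Call a color private to `v` if every edge of that color is incident to `v`. If some vertex has at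
most one private color, deleting it loses at most one color, so induction from the triangle bounds
the number of colors by `n`. Otherwise let `u` have distinct private colors on `us` and `ut`.
Avoiding a properly colored `u s y t` forces `c s y = c t y` for every other `y`; hence the private
colors of `s` lie on `su` and `st`, so `su` is the only edge of its color, and by the same argument
at `s` also `c u y = c t y = c s y`. A fourth vertex `y` then has `c u y` as its only private color:
any other private color `c y w` would make `u s y w` properly colored. The lower bound is attained
by giving the edges at one vertex distinct colors and all other edges one further color.
-/

section PrivateColors

variable {V α : Type*}

def IsPrivateColor (c : V → V → α) (v : V) (a : α) : Prop :=
  ∀ i j, i ≠ j → c i j = a → i = v ∨ j = v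

def HasTwoPrivateColors (c : V → V → α) (v : V) : Prop :=
  ∃ s t, s ≠ v ∧ t ≠ v ∧ IsPrivateColor c v (c v s) ∧ IsPrivateColor c v (c v t) ∧
    c v s ≠ c v t

def IsProperFourCycle (c : V → V → α) (a b x y : V) : Prop :=
  a ≠ b ∧ a ≠ x ∧ a ≠ y ∧ b ≠ x ∧ b ≠ y ∧ x ≠ y ∧
    c a b ≠ c b x ∧ c b x ≠ c x y ∧ c x y ≠ c y a ∧ c y a ≠ c a b

theorem not_isProperFourCycle_of_constant_off_vertex {c : V → V → α} {v : V} {k : α}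
    (hk : ∀ i j, i ≠ v → j ≠ v → c i j = k) (a b x y : V) :
    ¬ IsProperFourCycle c a b x y := by
  rintro ⟨hab, hax, hay, hbx, hby, hxy, h₁, h₂, h₃, h₄⟩
  by_cases ha : a = v
  · subst ha
    exact h₂ ((hk _ _ (Ne.symm hab) (Ne.symm hax)).trans
      (hk _ _ (Ne.symm hax) (Ne.symm hay)).symm)
  by_cases hb : b = v
  · subst hb
    exact h₃ ((hk _ _ (Ne.symm hbx) (Ne.symm hby)).trans (hk _ _ (Ne.symm hby) hab).symm)
  by_cases hx : x = v
  · subst hx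
    exact h₄ ((hk _ _ (Ne.symm hxy) ha).trans (hk _ _ ha hb).symm)
  · exact h₁ ((hk _ _ ha hb).trans (hk _ _ hb hx).symm)

variable {c : V → V → α}

theorem isProperFourCycle_of_isPrivateColor (hsym : ∀ i j, c i j = c j i) {v s t y : V}
    (hs : IsPrivateColor c v (c v s)) (ht : IsPrivateColor c v (c v t)) (hst : c v s ≠ c v t)
    (hsv : s ≠ v) (htv : t ≠ v) (hyv : y ≠ v) (hys : y ≠ s) (hyt : y ≠ t)
    (hne : c s y ≠ c t y) : IsProperFourCycle c v s y t := by
  have hst' : s ≠ t := by rintro rfl; exact hst rfl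
  refine ⟨hsv.symm, hyv.symm, htv.symm, hys.symm, hst', hyt, fun h => ?_, fun h => ?_,
    fun h => ?_, fun h => ?_⟩
  · rcases hs s y hys.symm h.symm with rfl | rfl <;> contradiction
  · exact hne (h.trans (hsym y t))
  · rcases ht y t hyt (h.trans (hsym t v)) with rfl | rfl <;> contradiction
  · exact hst ((hsym v t).trans h).symm

theorem eq_of_isPrivateColor (hsym : ∀ i j, c i j = c j i)
    (hno : ∀ a b x y, ¬ IsProperFourCycle c a b x y) {v s t y : V}
    (hs : IsPrivateColor c v (c v s)) (ht : IsPrivateColor c v (c v t)) (hst : c v s ≠ c v t)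
    (hsv : s ≠ v) (htv : t ≠ v) (hyv : y ≠ v) (hys : y ≠ s) (hyt : y ≠ t) :
    c s y = c t y :=
  not_not.1 fun hne =>
    hno _ _ _ _ (isProperFourCycle_of_isPrivateColor hsym hs ht hst hsv htv hyv hys hyt hne)

theorem eq_or_eq_of_isPrivateColor (hsym : ∀ i j, c i j = c j i)
    (hno : ∀ a b x y, ¬ IsProperFourCycle c a b x y) {v s t w : V}
    (hs : IsPrivateColor c v (c v s)) (ht : IsPrivateColor c v (c v t)) (hst : c v s ≠ c v t)
    (hsv : s ≠ v) (htv : t ≠ v) (hws : w ≠ s) (hw : IsPrivateColor c s (c s w)) :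
    w = v ∨ w = t := by
  by_contra! hwvt
  have hts : t ≠ s := by rintro rfl; exact hst rfl
  have := eq_of_isPrivateColor hsym hno hs ht hst hsv htv hwvt.1 hws hwvt.2
  rcases hw t w (Ne.symm hwvt.2) this.symm with rfl | rfl <;> contradiction

theorem isPrivateColor_toward_of_hasTwoPrivateColors (hsym : ∀ i j, c i j = c j i)
    (hno : ∀ a b x y, ¬ IsProperFourCycle c a b x y) {v s t : V}
    (hs : IsPrivateColor c v (c v s)) (ht : IsPrivateColor c v (c v t)) (hst : c v s ≠ c v t)
    (hsv : s ≠ v) (htv : t ≠ v) (H : HasTwoPrivateColors c s) :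
    IsPrivateColor c s (c s v) ∧ IsPrivateColor c s (c s t) ∧ c s v ≠ c s t := by
  obtain ⟨p, q, hp, hq, hPp, hPq, hpq⟩ := H
  have hpq' : p ≠ q := by rintro rfl; exact hpq rfl
  rcases eq_or_eq_of_isPrivateColor hsym hno hs ht hst hsv htv hp hPp with rfl | rfl <;>
    rcases eq_or_eq_of_isPrivateColor hsym hno hs ht hst hsv htv hq hPq with rfl | rfl
  · exact absurd rfl hpq'
  · exact ⟨hPp, hPq, hpq⟩
  · exact ⟨hPq, hPp, hpq.symm⟩
  · exact absurd rfl hpq'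

theorem not_hasTwoPrivateColors_of_uniqueColor (hsym : ∀ i j, c i j = c j i)
    (hno : ∀ a b x y, ¬ IsProperFourCycle c a b x y) {u x y : V} (hux : u ≠ x)
    (hu : IsPrivateColor c u (c u x)) (hx : IsPrivateColor c x (c u x)) (hxy : c x y = c u y)
    (hyu : y ≠ u) (hyx : y ≠ x) : ¬ HasTwoPrivateColors c y := by
  -- otherwise `u x y w` is properly colored
  have key : ∀ w, w ≠ y → IsPrivateColor c y (c y w) → c y w = c u y := by
    intro w hwy hw
    by_cases hwu : w = u
    · rw [hwu, hsym]
    by_cases hwx : w = x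
    · rw [hwx, hsym, hxy]
    by_contra hne
    refine hno u x y w ⟨hux, hyu.symm, Ne.symm hwu, hyx.symm, Ne.symm hwx, Ne.symm hwy,
      fun h => ?_, fun h => ?_, fun h => ?_, fun h => ?_⟩
    · rcases hu x y hyx.symm h.symm with rfl | rfl <;> contradiction
    · exact hne (hxy ▸ h).symm
    · rcases hw w u hwu h.symm with rfl | rfl <;> contradiction
    · rcases hx w u hwu h with rfl | rfl <;> contradiction
  rintro ⟨s, t, hs, ht, hPs, hPt, hst⟩
  exact hst ((key s hs hPs).trans (key t ht hPt).symm)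

theorem exists_isProperFourCycle_of_forall_hasTwoPrivateColors [Fintype V]
    (hV : 4 ≤ Fintype.card V) (hsym : ∀ i j, c i j = c j i)
    (H : ∀ v, HasTwoPrivateColors c v) : ∃ a b x y, IsProperFourCycle c a b x y := by
  classical
  by_contra! hno
  obtain ⟨u⟩ : Nonempty V := Fintype.card_pos_iff.1 (by omega)
  obtain ⟨s, t, hsu, htu, hs, ht, hst⟩ := H u
  obtain ⟨y, -, hy⟩ := Finset.exists_mem_notMem_of_card_lt_card (s := {u, s, t})
    (t := Finset.univ) (by rw [Finset.card_univ]; exact Finset.card_le_three.trans_lt (by omega))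
  simp only [Finset.mem_insert, Finset.mem_singleton, not_or] at hy
  obtain ⟨hyu, hys, hyt⟩ := hy
  obtain ⟨hPsu, hPst, hsut⟩ :=
    isPrivateColor_toward_of_hasTwoPrivateColors hsym hno hs ht hst hsu htu (H s)
  have hts : t ≠ s := by rintro rfl; exact hst rfl
  have hsy := eq_of_isPrivateColor hsym hno hs ht hst hsu htu hyu hys hyt
  have huy := eq_of_isPrivateColor hsym hno hPsu hPst hsut (Ne.symm hsu) hts hys hyu hyt
  exact not_hasTwoPrivateColors_of_uniqueColor hsym hno (Ne.symm hsu) hs (hsym u s ▸ hPsu)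
    (hsy.trans huy.symm) hyu hys (H y)

end PrivateColors

theorem hasPCCycle_four_iff {n : ℕ} {c : Fin n → Fin n → ℕ} :
    HasPCCycle n 4 c ↔ ∃ a b x y, IsProperFourCycle c a b x y := by
  constructor
  · rintro ⟨p, hp, hc⟩
    exact ⟨p 0, p 1, p 2, p 3, hp.ne (by decide), hp.ne (by decide), hp.ne (by decide),
      hp.ne (by decide), hp.ne (by decide), hp.ne (by decide), hc 0, hc 1, hc 2, hc 3⟩
  · rintro ⟨a, b, x, y, hab, hax, hay, hbx, hby, hxy, h₁, h₂, h₃, h₄⟩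
    refine ⟨![a, b, x, y], ?_, ?_⟩
    · intro i j hij
      fin_cases i <;> fin_cases j <;> simp_all
    · intro i
      fin_cases i
      exacts [h₁, h₂, h₃, h₄]

theorem HasPCCycle.of_comp {m n k : ℕ} {c : Fin n → Fin n → ℕ} {f : Fin m → Fin n}
    (hf : Function.Injective f) (h : HasPCCycle m k fun i j => c (f i) (f j)) :
    HasPCCycle n k c := by
  obtain ⟨p, hp, hc⟩ := h
  exact ⟨f ∘ p, hf.comp hp, hc⟩

theorem colorsUsed_le_card {n : ℕ} {c : Fin n → Fin n → ℕ} {s : Finset ℕ}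
    (h : ∀ i j, i ≠ j → c i j ∈ s) : colorsUsed n c ≤ s.card := by
  refine Finset.card_le_card fun a ha => ?_
  obtain ⟨⟨i, j⟩, hij, rfl⟩ := Finset.mem_image.1 ha
  exact h i j (Finset.mem_filter.1 hij).2

theorem card_le_colorsUsed_s7 {n : ℕ} {c : Fin n → Fin n → ℕ} {s : Finset ℕ}
    (h : ∀ a ∈ s, ∃ i j, i ≠ j ∧ c i j = a) : s.card ≤ colorsUsed n c := by
  refine Finset.card_le_card fun a ha => ?_
  obtain ⟨i, j, hij, rfl⟩ := h a ha
  exact Finset.mem_image.2 ⟨(i, j), Finset.mem_filter.2 ⟨Finset.mem_univ _, hij⟩, rfl⟩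

theorem colorsUsed_three_le {c : Fin 3 → Fin 3 → ℕ} (hsym : ∀ i j, c i j = c j i) :
    colorsUsed 3 c ≤ 3 := by
  refine (colorsUsed_le_card (s := {c 0 1, c 0 2, c 1 2}) fun i j hij => ?_).trans
    Finset.card_le_three
  fin_cases i <;> fin_cases j <;> simp [hsym 1 0, hsym 2 0, hsym 2 1] at hij ⊢

theorem colorsUsed_succ_le {m : ℕ} {c : Fin (m + 1) → Fin (m + 1) → ℕ}
    (hsym : ∀ i j, c i j = c j i) {v : Fin (m + 1)} (hv : ¬ HasTwoPrivateColors c v) :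
    colorsUsed (m + 1) c ≤ colorsUsed m (fun i j => c (v.succAbove i) (v.succAbove j)) + 1 := by
  classical
  set A := (Finset.univ.filter fun p : Fin m × Fin m => p.1 ≠ p.2).image
    fun p => c (v.succAbove p.1) (v.succAbove p.2)
  have hA : ∀ i j, i ≠ j → i ≠ v → j ≠ v → c i j ∈ A := by
    intro i j hij hiv hjv
    obtain ⟨i', rfl⟩ := Fin.exists_succAbove_eq hiv
    obtain ⟨j', rfl⟩ := Fin.exists_succAbove_eq hjv
    exact Finset.mem_image.2
      ⟨(i', j'), Finset.mem_filter.2 ⟨Finset.mem_univ _, fun h => hij (congrArg _ h)⟩, rfl⟩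
  obtain ⟨a₀, ha₀⟩ :
      ∃ a₀, ∀ x, x ≠ v → IsPrivateColor c v (c v x) → c v x = a₀ := by
    by_cases hex : ∃ x, x ≠ v ∧ IsPrivateColor c v (c v x)
    · obtain ⟨x, hx, hPx⟩ := hex
      exact ⟨c v x, fun y hy hPy => not_not.1 fun hne => hv ⟨y, x, hy, hx, hPy, hPx, hne⟩⟩
    · exact ⟨0, fun x hx hPx => absurd ⟨x, hx, hPx⟩ hex⟩
  have hv' : ∀ x, x ≠ v → c v x ∈ insert a₀ A := by
    intro x hx
    by_cases hPx : IsPrivateColor c v (c v x)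
    · exact ha₀ x hx hPx ▸ Finset.mem_insert_self _ _
    · simp only [IsPrivateColor, not_forall, not_or] at hPx
      obtain ⟨i, j, hij, hcij, hiv, hjv⟩ := hPx
      exact Finset.mem_insert_of_mem (hcij ▸ hA i j hij hiv hjv)
  refine (colorsUsed_le_card (s := insert a₀ A) fun i j hij => ?_).trans
    (Finset.card_insert_le _ _)
  by_cases hiv : i = v
  · exact hiv ▸ hv' j (hiv ▸ Ne.symm hij)
  by_cases hjv : j = v
  · exact hsym i j ▸ hjv ▸ hv' i (hjv ▸ hij)
  exact Finset.mem_insert_of_mem (hA i j hij hiv hjv)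

theorem colorsUsed_le_of_not_hasPCCycle {n : ℕ} (hn : 3 ≤ n) {c : Fin n → Fin n → ℕ}
    (hsym : ∀ i j, c i j = c j i) (hno : ¬ HasPCCycle n 4 c) : colorsUsed n c ≤ n := by
  induction n, hn using Nat.le_induction with
  | base => exact colorsUsed_three_le hsym
  | succ m hm ih =>
    by_cases H : ∀ v, HasTwoPrivateColors c v
    · exact absurd (hasPCCycle_four_iff.2 <|
        exists_isProperFourCycle_of_forall_hasTwoPrivateColors (by simpa) hsym H) hno
    obtain ⟨v, hv⟩ := not_forall.1 H
    have := ih (c := fun i j => c (v.succAbove i) (v.succAbove j)) (fun i j => hsym _ _)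
      fun h => hno (h.of_comp Fin.succAbove_right_injective)
    linarith [colorsUsed_succ_le hsym hv]

def starColoring (n : ℕ) (i j : Fin n) : ℕ :=
  if i.val = 0 then j.val else if j.val = 0 then i.val else 0

theorem starColoring_comm (n : ℕ) (i j : Fin n) : starColoring n i j = starColoring n j i := by
  unfold starColoring
  split_ifs <;> omega

theorem not_hasPCCycle_starColoring (n : ℕ) : ¬ HasPCCycle n 4 (starColoring n) := by
  intro h
  obtain ⟨a, b, x, y, h⟩ := hasPCCycle_four_iff.1 h
  have hn : 0 < n := Nat.pos_of_ne_zero (by rintro rfl; exact a.elim0)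
  refine not_isProperFourCycle_of_constant_off_vertex (v := ⟨0, hn⟩) (k := 0)
    (fun i j hi hj => ?_) a b x y h
  simp [starColoring, Fin.ext_iff] at hi hj ⊢
  simp [hi, hj]

theorem le_colorsUsed_starColoring {n : ℕ} (hn : 3 ≤ n) :
    n ≤ colorsUsed n (starColoring n) := by
  simpa using card_le_colorsUsed_s7 (s := Finset.range n) fun a ha => by
    rw [Finset.mem_range] at ha
    rcases Nat.eq_zero_or_pos a with rfl | ha₀
    · exact ⟨⟨1, by omega⟩, ⟨2, by omega⟩, by simp [Fin.ext_iff],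
        by simp [starColoring]⟩
    · exact ⟨⟨0, by omega⟩, ⟨a, ha⟩, by simp [Fin.ext_iff]; omega,
        by simp [starColoring]⟩

/-- For every `n ≥ 4`, the maximum number of colors in an edge-coloring of `K_n`
with no properly colored `C_4` equals `n`. -/
theorem pr_C4 (n : ℕ) (hn : 4 ≤ n) :
    IsGreatest {m : ℕ | ∃ c : Fin n → Fin n → ℕ, (∀ i j, c i j = c j i) ∧
      ¬ HasPCCycle n 4 c ∧ colorsUsed n c = m} n := by
  refine ⟨⟨starColoring n, starColoring_comm n, not_hasPCCycle_starColoring n, ?_⟩, ?_⟩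
  · exact le_antisymm (colorsUsed_le_of_not_hasPCCycle (by omega) (starColoring_comm n)
      (not_hasPCCycle_starColoring n)) (le_colorsUsed_starColoring (by omega))
  · rintro m ⟨c, hsym, hno, rfl⟩
    exact colorsUsed_le_of_not_hasPCCycle (by omega) hsym hno
end

section
/- For every n ≥ 5, there exists an edge-coloring of K_n with at least 7n/4 + O(1) colors (precisely, at least 7(n - 4)/4 colors) containing no properly colored copy of K_{2,3}. -/
/-- The edge-colored `K_n` contains a properly colored copy of `K_{2,3}` with parts
`{a, b}` and `{x, y, z}`: adjacent edges of the copy receive distinct colors. -/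
def HasPCK23 (n : ℕ) (c : Fin n → Fin n → ℕ) : Prop :=
  ∃ a b x y z : Fin n, a ≠ b ∧ a ≠ x ∧ a ≠ y ∧ a ≠ z ∧ b ≠ x ∧ b ≠ y ∧ b ≠ z ∧
    x ≠ y ∧ x ≠ z ∧ y ≠ z ∧
    c a x ≠ c a y ∧ c a x ≠ c a z ∧ c a y ≠ c a z ∧
    c b x ≠ c b y ∧ c b x ≠ c b z ∧ c b y ≠ c b z ∧
    c a x ≠ c b x ∧ c a y ≠ c b y ∧ c a z ≠ c b z

/-!
Split the vertices into blocks `{4k, …, 4k+3}`. Edges inside a block get pairwise distinct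
fresh colors; an edge between blocks `k < l` gets color `k`. If the centres `a, b` of a
properly colored `K_{2,3}` lie in the same block, every leaf `w` sees `a` and `b` in different
colors, which forces `w` into that block too, and a block has no room for five vertices.
Otherwise let `k` be the smaller of their blocks: for each leaf `w`, one of the edges `aw`, `bw`
has color `k`, so by pigeonhole two leaves are joined to the same centre in color `k`.
The `q = ⌊n/4⌋` full blocks contribute `6q` inner colors and the colors `0, …, q-2` appear
between consecutive blocks, giving `7q - 1 ≥ 7(n-4)/4` colors.
-/

open Finset

/-- Inner colors are at least `n`, so they never coincide with a block index `i / 4 < n`. -/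
def blockColoring (n i j : ℕ) : ℕ :=
  if i / 4 = j / 4 then n + Nat.pair (min i j) (max i j) else min (i / 4) (j / 4)

section blockColoring

variable {n i j a b w : ℕ}

theorem blockColoring_comm (n i j : ℕ) : blockColoring n i j = blockColoring n j i := by
  unfold blockColoring
  simp only [@eq_comm _ (i / 4), min_comm i, max_comm i, min_comm (i / 4)]

theorem blockColoring_of_div_eq (h : i / 4 = j / 4) :
    blockColoring n i j = n + Nat.pair (min i j) (max i j) :=
  if_pos h

theorem blockColoring_of_div_ne (h : i / 4 ≠ j / 4) :
    blockColoring n i j = min (i / 4) (j / 4) :=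
  if_neg h

theorem div_eq_of_blockColoring_ne (hab : a / 4 = b / 4)
    (hw : blockColoring n a w ≠ blockColoring n b w) : w / 4 = a / 4 := by
  by_contra hwa
  rw [blockColoring_of_div_ne (Ne.symm hwa), blockColoring_of_div_ne (by omega), hab] at hw
  exact hw rfl

theorem blockColoring_eq_min_of_ne (hab : a / 4 ≠ b / 4)
    (hw : blockColoring n a w ≠ blockColoring n b w) :
    blockColoring n a w = min (a / 4) (b / 4) ∨ blockColoring n b w = min (a / 4) (b / 4) := by
  rcases eq_or_ne (a / 4) (w / 4) with haw | haw
  · right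
    rw [blockColoring_of_div_ne (by omega), haw, min_comm]
  rcases eq_or_ne (b / 4) (w / 4) with hbw | hbw
  · left
    rw [blockColoring_of_div_ne haw, hbw]
  rw [blockColoring_of_div_ne haw, blockColoring_of_div_ne hbw] at hw ⊢
  omega

theorem not_hasPCK23_blockColoring (n : ℕ) :
    ¬ HasPCK23 n fun i j => blockColoring n i j := by
  rintro ⟨a, b, x, y, z, hab, hax, hay, haz, hbx, hby, hbz, hxy, hxz, hyz,
    haxy, haxz, hayz, hbxy, hbxz, hbyz, hx, hy, hz⟩
  rcases eq_or_ne ((a : ℕ) / 4) ((b : ℕ) / 4) with hsame | hdiff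
  · have hxa := div_eq_of_blockColoring_ne hsame hx
    have hya := div_eq_of_blockColoring_ne hsame hy
    have hza := div_eq_of_blockColoring_ne hsame hz
    simp only [ne_eq, Fin.ext_iff] at hab hax hay haz hbx hby hbz hxy hxz hyz
    omega
  · rcases blockColoring_eq_min_of_ne hdiff hx with hx | hx <;>
    rcases blockColoring_eq_min_of_ne hdiff hy with hy | hy <;>
    rcases blockColoring_eq_min_of_ne hdiff hz with hz | hz <;>
    simp_all

end blockColoring

def blockPairs : Finset (ℕ × ℕ) :=
  (range 4 ×ˢ range 4).filter fun p => p.1 < p.2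

theorem card_blockPairs : #blockPairs = 6 := by
  decide

/-- The color of the edge between positions `p.2.1` and `p.2.2` of block `p.1`. -/
def innerColor (n : ℕ) (p : ℕ × ℕ × ℕ) : ℕ :=
  n + Nat.pair (4 * p.1 + p.2.1) (4 * p.1 + p.2.2)

theorem card_image_innerColor (n q : ℕ) :
    #((range q ×ˢ blockPairs).image (innerColor n)) = 6 * q := by
  rw [card_image_of_injOn, card_product, card_range, card_blockPairs, mul_comm]
  rintro ⟨k, u, v⟩ hkuv ⟨k', u', v'⟩ hkuv' heq
  simp only [blockPairs, coe_product, coe_range, coe_filter, mem_product, mem_range,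
    Set.mem_prod, Set.mem_Iio, Set.mem_ofPred_eq] at hkuv hkuv'
  simp only [innerColor, add_right_inj, Nat.pair_eq_pair] at heq
  simp only [Prod.mk.injEq]
  omega

abbrev edgeColors (n : ℕ) (c : Fin n → Fin n → ℕ) : Finset ℕ :=
  (univ.filter fun p : Fin n × Fin n => p.1 ≠ p.2).image fun p => c p.1 p.2

theorem blockColoring_mem_edgeColors {n i j : ℕ} (hi : i < n) (hj : j < n) (hij : i ≠ j) :
    blockColoring n i j ∈ edgeColors n fun i j => blockColoring n i j :=
  mem_image.2 ⟨(⟨i, hi⟩, ⟨j, hj⟩), by simpa [Fin.ext_iff] using hij, rfl⟩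

theorem range_subset_edgeColors {n q : ℕ} (hq : 4 * q ≤ n) :
    range (q - 1) ⊆ edgeColors n fun i j => blockColoring n i j := by
  intro m hm
  rw [mem_range] at hm
  have hcolor : blockColoring n (4 * m) (4 * m + 4) = m := by
    rw [blockColoring_of_div_ne (by omega)]
    omega
  exact hcolor ▸ blockColoring_mem_edgeColors (by omega) (by omega) (by omega)

theorem image_innerColor_subset_edgeColors {n q : ℕ} (hq : 4 * q ≤ n) :
    (range q ×ˢ blockPairs).image (innerColor n) ⊆ edgeColors n fun i j => blockColoring n i j := by
  intro c hc
  obtain ⟨⟨k, u, v⟩, hkuv, rfl⟩ := mem_image.1 hc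
  simp only [blockPairs, mem_product, mem_range, mem_filter] at hkuv
  have hcolor : blockColoring n (4 * k + u) (4 * k + v) = innerColor n (k, u, v) := by
    rw [blockColoring_of_div_eq (by omega), min_eq_left (by omega), max_eq_right (by omega)]
    rfl
  exact hcolor ▸ blockColoring_mem_edgeColors (by omega) (by omega) (by omega)

theorem le_colorsUsed_blockColoring (n : ℕ) :
    7 * (n / 4) - 1 ≤ colorsUsed n fun i j => blockColoring n i j := by
  set q := n / 4
  have hq : 4 * q ≤ n := Nat.mul_div_le n 4
  have hdisj : Disjoint (range (q - 1)) ((range q ×ˢ blockPairs).image (innerColor n)) := by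
    simp only [disjoint_left, mem_range, mem_image, innerColor, not_exists, not_and]
    omega
  calc 7 * q - 1 = #(range (q - 1) ∪ (range q ×ˢ blockPairs).image (innerColor n)) := by
        rw [card_union_of_disjoint hdisj, card_range, card_image_innerColor]
        omega
    _ ≤ #(edgeColors n fun i j => blockColoring n i j) :=
        card_le_card (union_subset (range_subset_edgeColors hq)
          (image_innerColor_subset_edgeColors hq))

theorem pr_K23_lower_general (n : ℕ) :
    ∃ c : Fin n → Fin n → ℕ, (∀ i j, c i j = c j i) ∧ ¬ HasPCK23 n c ∧
      7 * (n - 4) / 4 ≤ colorsUsed n c :=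
  ⟨fun i j => blockColoring n i j, fun i j => blockColoring_comm n i j,
    not_hasPCK23_blockColoring n, le_trans (by omega) (le_colorsUsed_blockColoring n)⟩

/-- For every `n ≥ 5`, there is an edge-coloring of `K_n` with at least `7(n-4)/4`
colors and no properly colored copy of `K_{2,3}`. -/
theorem pr_K23_lower (n : ℕ) (hn : 5 ≤ n) :
    ∃ c : Fin n → Fin n → ℕ, (∀ i j, c i j = c j i) ∧ ¬ HasPCK23 n c ∧
      7 * (n - 4) / 4 ≤ colorsUsed n c :=
  pr_K23_lower_general n
end

section
/- In any edge-coloring c of K_n (n ≥ 6) in which every vertex v has d^c(v) ≥ 2 and which contains a rainbow bull graph B (with triangle xyz and pendant edges yu, zv, all five edges having distinct colors), there is a properly colored cycle on 5 vertices. -/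
/-- In the edge-coloring `c` of `K_n`, the color `a` is starred at the vertex `x`:
`a` appears on some edge, and every edge of color `a` is incident with `x`
(so the edges of color `a` form a star centered at `x`). -/
def Starred (n : ℕ) (c : Fin n → Fin n → ℕ) (a : ℕ) (x : Fin n) : Prop :=
  (∃ i j : Fin n, i ≠ j ∧ c i j = a) ∧
    ∀ i j : Fin n, i ≠ j → c i j = a → i = x ∨ j = x

/-
Along the rainbow bull, `u y x z v` is a properly colored path, so it closes to a properly colored
`C_5` unless `c u v` repeats the color of `yu` or of `zv`; by the symmetry of the bull we may assume
`c u v = c y u`. Pick colors `β ≠ c z v` starred at `v` and `γ ≠ c y u` starred at `u`, with edges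
`v w` of color `β` and `u w'` of color `γ`. A starred color cannot appear on an edge away from its
center, so a properly colored path `p₀ p₁ p₂ p₃` leaving the center `p₀` of a starred color `a` by an
edge of another color closes through the `a`-colored edge `p₀ w`, unless `w` lies on the path or
`c p₃ w = c p₂ p₃`. A short case analysis on where `w` and `w'` lie, and on a few colors at `w`
and `w'`, always leaves one of these closings available.
-/

section

variable {n : ℕ} {c : Fin n → Fin n → ℕ}

theorem hasPCCycle_five (p₀ p₁ p₂ p₃ p₄ : Fin n)
    (h₀₁ : p₀ ≠ p₁) (h₀₂ : p₀ ≠ p₂) (h₀₃ : p₀ ≠ p₃) (h₀₄ : p₀ ≠ p₄)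
    (h₁₂ : p₁ ≠ p₂) (h₁₃ : p₁ ≠ p₃) (h₁₄ : p₁ ≠ p₄) (h₂₃ : p₂ ≠ p₃) (h₂₄ : p₂ ≠ p₄)
    (h₃₄ : p₃ ≠ p₄)
    (e₀ : c p₀ p₁ ≠ c p₁ p₂) (e₁ : c p₁ p₂ ≠ c p₂ p₃) (e₂ : c p₂ p₃ ≠ c p₃ p₄)
    (e₃ : c p₃ p₄ ≠ c p₄ p₀) (e₄ : c p₄ p₀ ≠ c p₀ p₁) : HasPCCycle n 5 c := by
  refine ⟨![p₀, p₁, p₂, p₃, p₄], ?_, ?_⟩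
  · intro i j h
    fin_cases i <;> fin_cases j <;> simp_all
  · intro i
    fin_cases i <;> simp_all

theorem Starred.color_ne {a : ℕ} {v i j : Fin n} (h : Starred n c a v)
    (hi : i ≠ v) (hj : j ≠ v) (hij : i ≠ j) : c i j ≠ a := fun e =>
  (h.2 i j hij e).elim hi hj

theorem Starred.exists_edge (hsym : ∀ i j, c i j = c j i) {a : ℕ} {v : Fin n}
    (h : Starred n c a v) : ∃ w, w ≠ v ∧ c v w = a := by
  obtain ⟨⟨i, j, hij, hc⟩, hst⟩ := h
  rcases hst i j hij hc with rfl | rfl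
  · exact ⟨j, hij.symm, hc⟩
  · exact ⟨i, hij, hsym _ i ▸ hc⟩

theorem exists_starred_ne {v : Fin n}
    (h : ∃ a b : ℕ, a ≠ b ∧ Starred n c a v ∧ Starred n c b v) (d : ℕ) :
    ∃ a, a ≠ d ∧ Starred n c a v := by
  obtain ⟨a, b, hab, ha, hb⟩ := h
  by_cases had : a = d
  · exact ⟨b, fun hbd => hab (had.trans hbd.symm), hb⟩
  · exact ⟨a, had, ha⟩

/-- The cycle `w p₀ p₁ p₂ p₃`: its closing edge `p₃ w` misses `p₀`, so it cannot carry the color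
`a` of `w p₀`. -/
theorem hasPCCycle_of_starred_path (hsym : ∀ i j, c i j = c j i) {a : ℕ}
    {p₀ p₁ p₂ p₃ w : Fin n} (ha : Starred n c a p₀) (hw : c p₀ w = a)
    (hw₀ : w ≠ p₀) (hw₂ : w ≠ p₂) (hw₃ : w ≠ p₃)
    (h₀₁ : p₀ ≠ p₁) (h₀₂ : p₀ ≠ p₂) (h₀₃ : p₀ ≠ p₃) (h₁₂ : p₁ ≠ p₂) (h₁₃ : p₁ ≠ p₃)
    (h₂₃ : p₂ ≠ p₃)
    (e₀ : c p₀ p₁ ≠ a) (e₁ : c p₀ p₁ ≠ c p₁ p₂) (e₂ : c p₁ p₂ ≠ c p₂ p₃)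
    (e₃ : c p₂ p₃ ≠ c p₃ w) : HasPCCycle n 5 c := by
  have hw₁ : w ≠ p₁ := by rintro rfl; exact e₀ hw
  have hwp₀ : c w p₀ = a := hsym w p₀ ▸ hw
  refine hasPCCycle_five w p₀ p₁ p₂ p₃ hw₀ hw₁ hw₂ hw₃ h₀₁ h₀₂ h₀₃ h₁₂ h₁₃ h₂₃
    (hwp₀ ▸ e₀.symm) e₁ e₂ e₃ ?_
  rw [hwp₀]
  exact ha.color_ne h₀₃.symm hw₀ hw₃.symm

theorem hasPCCycle_of_starred_path_uvzy (hsym : ∀ i j, c i j = c j i) {y z u v : Fin n}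
    (hyz : y ≠ z) (hyu : y ≠ u) (hyv : y ≠ v) (hzu : z ≠ u) (hzv : z ≠ v) (huv : u ≠ v)
    (h₃₅ : c y z ≠ c z v) (h₄₅ : c y u ≠ c z v) (huv_yu : c u v = c y u)
    {γ : ℕ} {w' : Fin n} (sγ : Starred n c γ u) (hγ : γ ≠ c y u) (huw' : c u w' = γ)
    (hw'u : w' ≠ u) (hw'z : w' ≠ z) (hyw' : c y w' ≠ c y z) : HasPCCycle n 5 c := by
  have hw'y : w' ≠ y := by rintro rfl; exact hγ (by rw [← huw', hsym])
  have huv_γ : c u v ≠ γ := by rw [huv_yu]; exact hγ.symm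
  exact hasPCCycle_of_starred_path hsym sγ huw' hw'u hw'z hw'y huv hzu.symm hyu.symm hzv.symm
    hyv.symm hyz.symm huv_γ (by rw [huv_yu, hsym v z]; exact h₄₅)
    (by rw [hsym v z, hsym z y]; exact h₃₅.symm) (by rw [hsym z y]; exact Ne.symm hyw')

theorem hasPCCycle_of_bull_of_starred_edge_to_y (hsym : ∀ i j, c i j = c j i)
    {x y z u v : Fin n} (hu : ∃ a b : ℕ, a ≠ b ∧ Starred n c a u ∧ Starred n c b u)
    (hxy : x ≠ y) (hxz : x ≠ z) (hxu : x ≠ u) (hxv : x ≠ v)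
    (hyz : y ≠ z) (hyu : y ≠ u) (hyv : y ≠ v)
    (hzu : z ≠ u) (hzv : z ≠ v) (huv : u ≠ v)
    (h₁₂ : c x y ≠ c x z) (h₁₃ : c x y ≠ c y z) (h₂₅ : c x z ≠ c z v)
    (h₃₅ : c y z ≠ c z v) (h₄₅ : c y u ≠ c z v) (huv_yu : c u v = c y u)
    {β : ℕ} (sβ : Starred n c β v) (hvy : c v y = β) : HasPCCycle n 5 c := by
  obtain ⟨γ, hγ, sγ⟩ := exists_starred_ne hu (c y u)
  obtain ⟨w', hw'u, huw'⟩ := sγ.exists_edge hsym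
  have hyu_β : c y u ≠ β := sβ.color_ne hyv huv hyu
  have huv_γ : c u v ≠ γ := by rw [huv_yu]; exact hγ.symm
  by_cases hw'z : w' = z
  · subst w'
    exact hasPCCycle_of_starred_path hsym sβ hvy hyv hyz hxy.symm huv.symm hzv.symm
      hxv.symm hzu.symm hxu.symm hxz.symm (by rwa [hsym, huv_yu])
      (by rw [hsym, huv_yu, huw']; exact hγ.symm)
      (by rw [huw', hsym z x]; exact (sγ.color_ne hxu hzu hxz).symm)
      (by rw [hsym z x]; exact h₁₂.symm)
  by_cases hyw' : c y w' = c y z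
  swap
  · exact hasPCCycle_of_starred_path_uvzy hsym hyz hyu hyv hzu hzv huv h₃₅ h₄₅ huv_yu sγ hγ
      huw' hw'u hw'z hyw'
  have hw'x : w' ≠ x := by rintro rfl; exact h₁₃ (by rw [hsym, hyw'])
  by_cases hxw' : c x w' = c x y
  · exact hasPCCycle_of_starred_path hsym sγ huw' hw'u hw'z hw'x huv hzu.symm hxu.symm
      hzv.symm hxv.symm hxz.symm huv_γ (by rw [huv_yu, hsym v z]; exact h₄₅)
      (by rw [hsym v z, hsym z x]; exact h₂₅.symm) (by rw [hsym z x, hxw']; exact h₁₂.symm)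
  · have hw'y : w' ≠ y := by rintro rfl; exact hγ (by rw [← huw', hsym])
    exact hasPCCycle_of_starred_path hsym sγ huw' hw'u hw'y hw'x huv hyu.symm hxu.symm
      hyv.symm hxv.symm hxy.symm huv_γ (by rwa [huv_yu, hvy])
      (by rw [hvy, hsym y x]; exact (sβ.color_ne hxv hyv hxy).symm)
      (by rw [hsym y x]; exact Ne.symm hxw')

theorem hasPCCycle_of_bull_of_starred_edge_ne_y (hsym : ∀ i j, c i j = c j i)
    {x y z u v : Fin n} (hu : ∃ a b : ℕ, a ≠ b ∧ Starred n c a u ∧ Starred n c b u)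
    (hxy : x ≠ y) (hxz : x ≠ z) (hxv : x ≠ v)
    (hyz : y ≠ z) (hyu : y ≠ u) (hyv : y ≠ v)
    (hzu : z ≠ u) (hzv : z ≠ v) (huv : u ≠ v)
    (h₁₂ : c x y ≠ c x z) (h₁₃ : c x y ≠ c y z) (h₂₅ : c x z ≠ c z v)
    (h₃₄ : c y z ≠ c y u) (h₃₅ : c y z ≠ c z v) (h₄₅ : c y u ≠ c z v) (huv_yu : c u v = c y u)
    {β : ℕ} {w : Fin n} (sβ : Starred n c β v) (hβ : β ≠ c z v) (hvw : c v w = β)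
    (hwv : w ≠ v) (hwy : w ≠ y) : HasPCCycle n 5 c := by
  have hvz_β : c v z ≠ β := by rw [hsym]; exact hβ.symm
  have hvu_β : c v u ≠ β := by rw [hsym, huv_yu]; exact sβ.color_ne hyv huv hyu
  have hwu : w ≠ u := by rintro rfl; exact hvu_β hvw
  have hwz : w ≠ z := by rintro rfl; exact hvz_β hvw
  by_cases hyw : c y w = c x y
  swap
  · have hwx : w ≠ x := by rintro rfl; exact hyw (hsym y w)
    exact hasPCCycle_of_starred_path hsym sβ hvw hwv hwx hwy hzv.symm hxv.symm hyv.symm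
      hxz.symm hyz.symm hxy hvz_β (by rw [hsym v z, hsym z x]; exact h₂₅.symm)
      (by rw [hsym z x]; exact h₁₂.symm) (Ne.symm hyw)
  obtain ⟨γ, hγ, sγ⟩ := exists_starred_ne hu (c y u)
  obtain ⟨w', hw'u, huw'⟩ := sγ.exists_edge hsym
  by_cases hw'z : w' = z
  · subst w'
    exact hasPCCycle_of_starred_path hsym sβ hvw hwv hwz hwy huv.symm hzv.symm hyv.symm
      hzu.symm hyu.symm hyz.symm hvu_β (by rw [hsym, huv_yu, huw']; exact hγ.symm)
      (by rw [huw', hsym z y]; exact (sγ.color_ne hyu hzu hyz).symm)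
      (by rw [hsym z y, hyw]; exact h₁₃.symm)
  by_cases hyw' : c y w' = c y z
  swap
  · exact hasPCCycle_of_starred_path_uvzy hsym hyz hyu hyv hzu hzv huv h₃₅ h₄₅ huv_yu sγ hγ
      huw' hw'u hw'z hyw'
  by_cases hw'w : w' = w
  · subst w'
    exact hasPCCycle_of_starred_path hsym sβ hvw hwv hwy hwu hzv.symm hyv.symm huv.symm
      hyz.symm hzu hyu hvz_β (by rw [hsym v z, hsym z y]; exact h₃₅.symm)
      (by rw [hsym z y]; exact h₃₄) (by rw [huw']; exact hγ.symm)
  have hw'y : w' ≠ y := by rintro rfl; exact hγ (by rw [← huw', hsym])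
  exact hasPCCycle_of_starred_path hsym sγ huw' hw'u hw'w hw'y huv hwu.symm hyu.symm
    hwv.symm hyv.symm hwy (by rw [huv_yu]; exact hγ.symm)
    (by rw [huv_yu, hvw]; exact sβ.color_ne hyv huv hyu)
    (by rw [hvw]; exact (sβ.color_ne hwv hyv hwy).symm)
    (by rw [hsym w y, hyw, hyw']; exact h₁₃)

theorem hasPCCycle_of_bull_of_color_uv_eq (hsym : ∀ i j, c i j = c j i)
    (hstar : ∀ w : Fin n, ∃ a b : ℕ, a ≠ b ∧ Starred n c a w ∧ Starred n c b w)
    {x y z u v : Fin n}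
    (hxy : x ≠ y) (hxz : x ≠ z) (hxu : x ≠ u) (hxv : x ≠ v)
    (hyz : y ≠ z) (hyu : y ≠ u) (hyv : y ≠ v)
    (hzu : z ≠ u) (hzv : z ≠ v) (huv : u ≠ v)
    (h₁₂ : c x y ≠ c x z) (h₁₃ : c x y ≠ c y z) (h₂₅ : c x z ≠ c z v)
    (h₃₄ : c y z ≠ c y u) (h₃₅ : c y z ≠ c z v) (h₄₅ : c y u ≠ c z v)
    (huv_yu : c u v = c y u) :
    HasPCCycle n 5 c := by
  obtain ⟨β, hβ, sβ⟩ := exists_starred_ne (hstar v) (c z v)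
  obtain ⟨w, hwv, hvw⟩ := sβ.exists_edge hsym
  by_cases hwy : w = y
  · subst w
    exact hasPCCycle_of_bull_of_starred_edge_to_y hsym (hstar u) hxy hxz hxu hxv hyz hyu hyv hzu
      hzv huv h₁₂ h₁₃ h₂₅ h₃₅ h₄₅ huv_yu sβ hvw
  · exact hasPCCycle_of_bull_of_starred_edge_ne_y hsym (hstar u) hxy hxz hxv hyz hyu hyv hzu
      hzv huv h₁₂ h₁₃ h₂₅ h₃₄ h₃₅ h₄₅ huv_yu sβ hβ hvw hwv hwy

end

theorem pc_C5_of_rainbow_bull_general (n : ℕ)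
    (c : Fin n → Fin n → ℕ) (hsym : ∀ i j, c i j = c j i)
    (hstar : ∀ w : Fin n, ∃ a b : ℕ, a ≠ b ∧ Starred n c a w ∧ Starred n c b w)
    (x y z u v : Fin n)
    (hxy : x ≠ y) (hxz : x ≠ z) (hxu : x ≠ u) (hxv : x ≠ v)
    (hyz : y ≠ z) (hyu : y ≠ u) (hyv : y ≠ v)
    (hzu : z ≠ u) (hzv : z ≠ v) (huv : u ≠ v)
    (h1 : c x y ≠ c x z) (h2 : c x y ≠ c y z) (h3 : c x y ≠ c y u)
    (h5 : c x z ≠ c y z) (h7 : c x z ≠ c z v)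
    (h8 : c y z ≠ c y u) (h9 : c y z ≠ c z v) (h10 : c y u ≠ c z v) :
    HasPCCycle n 5 c := by
  by_cases hu : c u v = c y u
  · exact hasPCCycle_of_bull_of_color_uv_eq hsym hstar hxy hxz hxu hxv hyz hyu hyv hzu hzv huv
      h1 h2 h7 h8 h9 h10 hu
  by_cases hv : c u v = c z v
  · exact hasPCCycle_of_bull_of_color_uv_eq hsym hstar hxz hxy hxv hxu hyz.symm hzv hzu hyv hyu
      huv.symm h1.symm (by rwa [hsym z y]) h3 (by rwa [hsym z y]) (by rwa [hsym z y])
      h10.symm (by rwa [hsym v u])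
  exact hasPCCycle_five u y x z v hyu.symm hxu.symm hzu.symm huv hxy.symm hyz hyv hxz hxv hzv
    (by rw [hsym u y, hsym y x]; exact h3.symm) (by rwa [hsym y x]) h7
    (by rw [hsym v u]; exact Ne.symm hv) (by rwa [hsym v u, hsym u y])

/-- If an edge-coloring of `K_n` (`n ≥ 6`) has at least two colors starred at every
vertex and contains a rainbow bull graph (triangle `xyz` with pendant edges `yu` and
`zv`, the five edges having five pairwise distinct colors), then `K_n` contains a
properly colored `C_5`. -/
theorem pc_C5_of_rainbow_bull (n : ℕ) (hn : 6 ≤ n)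
    (c : Fin n → Fin n → ℕ) (hsym : ∀ i j, c i j = c j i)
    (hstar : ∀ w : Fin n, ∃ a b : ℕ, a ≠ b ∧ Starred n c a w ∧ Starred n c b w)
    (x y z u v : Fin n)
    (hxy : x ≠ y) (hxz : x ≠ z) (hxu : x ≠ u) (hxv : x ≠ v)
    (hyz : y ≠ z) (hyu : y ≠ u) (hyv : y ≠ v)
    (hzu : z ≠ u) (hzv : z ≠ v) (huv : u ≠ v)
    (h1 : c x y ≠ c x z) (h2 : c x y ≠ c y z) (h3 : c x y ≠ c y u) (h4 : c x y ≠ c z v)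
    (h5 : c x z ≠ c y z) (h6 : c x z ≠ c y u) (h7 : c x z ≠ c z v)
    (h8 : c y z ≠ c y u) (h9 : c y z ≠ c z v) (h10 : c y u ≠ c z v) :
    HasPCCycle n 5 c :=
  pc_C5_of_rainbow_bull_general n c hsym hstar x y z u v hxy hxz hxu hxv hyz hyu hyv hzu hzv huv h1
    h2 h3 h5 h7 h8 h9 h10
end
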